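/- Let R be a generalised ray and let p ≥ 0. Then there exist subsets A and B of the coarse sphere S_R^{p+1} with A ∪ B = S_R^{p+1} such that: the decomposition S_R^{p+1} = A ∪ B is coarsely excisive; the subspaces A and B are each coarsely equivalent to the coarse disk D_R^{p+1}; and the subspace A ∩ B is coarsely equivalent to the coarse sphere S_R^p. -/

import Mathlib

open scoped NNReal

namespace CoarsePaper

variable {X Y : Type*}

/-- Composition `M N = {(x,z) | ∃ y, (x,y) ∈ M ∧ (y,z) ∈ N}` of subsets of `X × X`. -/
def Comp (M N : Set (X × X)) : Set (X × X) :=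
  {p | ∃ y, (p.1, y) ∈ M ∧ (y, p.2) ∈ N}

/-- A collection `c` of subsets of `X × X` (the *controlled sets*) is a coarse structure
if it contains the diagonal and is closed under subsets, finite unions, reflection in the
diagonal, and composition. -/
structure IsCoarseStructure (c : Set (Set (X × X))) : Prop where
  diag_mem : Set.diagonal X ∈ c
  subset_mem : ∀ ⦃M N : Set (X × X)⦄, M ∈ c → N ⊆ M → N ∈ c
  union_mem : ∀ ⦃M N : Set (X × X)⦄, M ∈ c → N ∈ c → M ∪ N ∈ c
  swap_mem : ∀ ⦃M : Set (X × X)⦄, M ∈ c → Prod.swap '' M ∈ c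
  comp_mem : ∀ ⦃M N : Set (X × X)⦄, M ∈ c → N ∈ c → Comp M N ∈ c

/-- A set `B ⊆ X` is bounded if `B = M_x = {y | (x,y) ∈ M}` for some controlled `M` and
some point `x`. -/
def IsBounded (c : Set (Set (X × X))) (B : Set X) : Prop :=
  ∃ M ∈ c, ∃ x : X, B = {y | (x, y) ∈ M}

/-- Two maps `f g : S → X` into a coarse space are close if `{(f s, g s) | s ∈ S}` is
controlled. -/
def Close {S : Type*} (c : Set (Set (X × X))) (f g : S → X) : Prop :=
  {p : X × X | ∃ s, p = (f s, g s)} ∈ c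

/-- A map between coarse spaces is a coarse map if images of controlled sets are controlled
and preimages of bounded sets are bounded. -/
def IsCoarseMap (cX : Set (Set (X × X))) (cY : Set (Set (Y × Y))) (f : X → Y) : Prop :=
  (∀ M ∈ cX, (fun p : X × X => (f p.1, f p.2)) '' M ∈ cY) ∧
    ∀ B : Set Y, IsBounded cY B → IsBounded cX (f ⁻¹' B)

/-- A coarse structure on a topological space is compatible with the topology if every
controlled set is contained in an open controlled set and the closure of every bounded set
is compact. -/
def Compatible [TopologicalSpace X] (c : Set (Set (X × X))) : Prop :=
  (∀ M ∈ c, ∃ U ∈ c, IsOpen U ∧ M ⊆ U) ∧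
    ∀ B : Set X, IsBounded c B → IsCompact (closure B)

/-- The coarse structure on the space `[0,∞) = ℝ≥0` making it a generalised ray:
a coarse structure compatible with the topology, closed under sums `M + N`, under the
squeezing operation `Mˢ`, and under translations `a + M`. -/
structure IsGeneralisedRay (c : Set (Set (ℝ≥0 × ℝ≥0))) : Prop where
  coarse : IsCoarseStructure c
  compatible : Compatible c
  sum_mem : ∀ ⦃M N : Set (ℝ≥0 × ℝ≥0)⦄, M ∈ c → N ∈ c →
    {p : ℝ≥0 × ℝ≥0 | ∃ u v x y, (u, v) ∈ M ∧ (x, y) ∈ N ∧ p = (u + x, v + y)} ∈ c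
  squeeze_mem : ∀ ⦃M : Set (ℝ≥0 × ℝ≥0)⦄, M ∈ c →
    {p : ℝ≥0 × ℝ≥0 | ∃ x y, (x, y) ∈ M ∧ x ≤ p.1 ∧ p.1 ≤ y ∧ x ≤ p.2 ∧ p.2 ≤ y} ∈ c
  translate_mem : ∀ (a : ℝ≥0) ⦃M : Set (ℝ≥0 × ℝ≥0)⦄, M ∈ c →
    {p : ℝ≥0 × ℝ≥0 | ∃ x y, (x, y) ∈ M ∧ p = (a + x, a + y)} ∈ c

/-- The bounded coarse structure of a (pseudo)metric space: a set is controlled iff it is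
contained in some neighbourhood of the diagonal `{(x,y) | dist x y < r}`, `r > 0`. -/
def metricC (X : Type*) [PseudoMetricSpace X] : Set (Set (X × X)) :=
  {M | ∃ r : ℝ, 0 < r ∧ M ⊆ {p : X × X | dist p.1 p.2 < r}}

/-- The product coarse structure on `X × Y`: a set is controlled iff it is contained in
`{((u,v),(x,y)) | (u,x) ∈ M₁, (v,y) ∈ M₂}` for controlled `M₁ ⊆ X × X`, `M₂ ⊆ Y × Y`. -/
def prodC (cX : Set (Set (X × X))) (cY : Set (Set (Y × Y))) :
    Set (Set ((X × Y) × (X × Y))) :=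
  {M | ∃ M₁ ∈ cX, ∃ M₂ ∈ cY,
    M ⊆ {p : (X × Y) × (X × Y) | (p.1.1, p.2.1) ∈ M₁ ∧ (p.1.2, p.2.2) ∈ M₂}}

/-- The product coarse structure on a (finite) product `∀ i, Z i`: a set is controlled iff
it is contained in `{(f,g) | ∀ i, (f i, g i) ∈ M i}` for a family of controlled sets. -/
def piC {ι : Type*} {Z : ι → Type*} (c : ∀ i, Set (Set (Z i × Z i))) :
    Set (Set ((∀ i, Z i) × (∀ i, Z i))) :=
  {M | ∃ Mi : ∀ i, Set (Z i × Z i), (∀ i, Mi i ∈ c i) ∧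
    M ⊆ {p : (∀ i, Z i) × (∀ i, Z i) | ∀ i, (p.1 i, p.2 i) ∈ Mi i}}

/-- The subspace coarse structure on `A ⊆ X`: the controlled sets are (identified with)
the controlled sets of `X` contained in `A × A`. -/
def subC (cX : Set (Set (X × X))) (A : Set X) : Set (Set (↥A × ↥A)) :=
  {M : Set (↥A × ↥A) | (fun p : ↥A × ↥A => ((p.1 : X), (p.2 : X))) '' M ∈ cX}

/-- `B` is a finite union of bounded subsets. -/
def IsFinUnionBounded (c : Set (Set (X × X))) (B : Set X) : Prop :=
  ∃ (n : ℕ) (f : Fin n → Set X), (∀ i, IsBounded c (f i)) ∧ B = ⋃ i, f i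

/-- The coarse disjoint union structure on `X ⊕ Y`: a set is controlled iff it is contained
in `M_X ∪ M_Y ∪ (D × D)` where `M_X`, `M_Y` are controlled and `D` is a finite union of
bounded subsets of `X` and of `Y`. -/
def sumC (cX : Set (Set (X × X))) (cY : Set (Set (Y × Y))) :
    Set (Set ((X ⊕ Y) × (X ⊕ Y))) :=
  {M | ∃ MX ∈ cX, ∃ MY ∈ cY, ∃ BX : Set X, ∃ BY : Set Y,
    IsFinUnionBounded cX BX ∧ IsFinUnionBounded cY BY ∧
      M ⊆ (fun p : X × X => ((Sum.inl p.1 : X ⊕ Y), Sum.inl p.2)) '' MX ∪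
          (fun p : Y × Y => ((Sum.inr p.1 : X ⊕ Y), Sum.inr p.2)) '' MY ∪
          (Sum.inl '' BX ∪ Sum.inr '' BY) ×ˢ (Sum.inl '' BX ∪ Sum.inr '' BY)}

/-- A coarse map `f` is a coarse equivalence if there is a coarse map `g` in the opposite
direction with `g ∘ f` and `f ∘ g` close to the respective identity maps. -/
def IsCoarseEquiv (cX : Set (Set (X × X))) (cY : Set (Set (Y × Y))) (f : X → Y) : Prop :=
  IsCoarseMap cX cY f ∧
    ∃ g : Y → X, IsCoarseMap cY cX g ∧
      Close cX (g ∘ f) (id : X → X) ∧ Close cY (f ∘ g) (id : Y → Y)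

/-- Two coarse spaces are coarsely equivalent if there is a coarse equivalence between
them. -/
def CoarselyEquivalent (cX : Set (Set (X × X))) (cY : Set (Set (Y × Y))) : Prop :=
  ∃ f : X → Y, IsCoarseEquiv cX cY f

/-- `m[S] = {y | (x,y) ∈ m for some x ∈ S}`. -/
def img (m : Set (X × X)) (S : Set X) : Set X := {y | ∃ x ∈ S, (x, y) ∈ m}

/-- A decomposition `X = A ∪ B` is coarsely excisive if for every controlled `m` there is
a controlled `M` with `m[A] ∩ m[B] ⊆ M[A ∩ B]`. -/
def IsCoarselyExcisive (c : Set (Set (X × X))) (A B : Set X) : Prop :=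
  A ∪ B = Set.univ ∧ ∀ m ∈ c, ∃ M ∈ c, img m A ∩ img m B ⊆ img M (A ∩ B)

/-- The underlying set `(R ∨ R)ⁿ × R` of the coarse `n`-disk. -/
abbrev DiskT (n : ℕ) : Type := (Fin n → ℝ≥0 ⊕ ℝ≥0) × ℝ≥0

/-- The coarse structure of the coarse `n`-disk `D_R^n = (R ∨ R)ⁿ × R`. -/
def diskC (c : Set (Set (ℝ≥0 × ℝ≥0))) (n : ℕ) : Set (Set (DiskT n × DiskT n)) :=
  prodC (piC fun _ : Fin n => sumC c c) c

/-- The coarse `(n-1)`-sphere `S_R^{n-1} = (R ∨ R)ⁿ × {0}` as a subset of the `n`-disk. -/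
def sphereSet (n : ℕ) : Set (DiskT n) := {q | q.2 = 0}

/-- The coarse structure of the coarse `(n-1)`-sphere `S_R^{n-1}`. -/
def sphereC (c : Set (Set (ℝ≥0 × ℝ≥0))) (n : ℕ) :
    Set (Set (↥(sphereSet n) × ↥(sphereSet n))) :=
  subC (diskC c n) (sphereSet n)


/-! Cut the sphere `(R ∨ R)ⁿ⁺¹ × {0}` along its last coordinate: the left hemisphere has its last
coordinate in the left copy of `R`, the right hemisphere in the right copy. Folding that last
`R ∨ R` onto `R` identifies each hemisphere with the disk `(R ∨ R)ⁿ × R`, and their common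
equator, where the last coordinate is `0`, with the sphere `(R ∨ R)ⁿ × {0}`. Excision holds
because a point that is controlled-close to both copies of `R` lies in the bounded part `D × D`
of the controlled set of `R ∨ R`, hence is also close to `0`.

In all these spaces a set is bounded iff the largest of its points' coordinates stays bounded
(for `R` this comes from compatibility with the topology, together with squeezing and adding
to make every square `[0, a]²` controlled), so properness of the maps reduces to comparing
these gauges. -/

variable {Z : Type*}

def IsBornologous (cX : Set (Set (X × X))) (cY : Set (Set (Y × Y))) (f : X → Y) : Prop :=
  ∀ M ∈ cX, (fun p : X × X => (f p.1, f p.2)) '' M ∈ cY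

section Bornologous

variable {cX : Set (Set (X × X))} {cY : Set (Set (Y × Y))} {cZ : Set (Set (Z × Z))}

theorem IsBornologous.comp {g : Y → Z} {f : X → Y} (hg : IsBornologous cY cZ g)
    (hf : IsBornologous cX cY f) : IsBornologous cX cZ (g ∘ f) := fun M hM => by
  have := hg _ (hf M hM)
  rwa [Set.image_image] at this

theorem isBornologous_subtype_val {A : Set X} : IsBornologous (subC cX A) cX Subtype.val :=
  fun _ hM => hM

theorem isBornologous_subC_iff {A : Set Y} {f : X → A} :
    IsBornologous cX (subC cY A) f ↔ IsBornologous cX cY (Subtype.val ∘ f) := by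
  simp only [IsBornologous, subC, Set.mem_ofPred_eq, Set.image_image, Function.comp_apply]

theorem close_iff_range {S : Type*} {f g : S → X} :
    Close cX f g ↔ Set.range (fun s => (f s, g s)) ∈ cX := by
  simp only [Close, Set.range, eq_comm]

theorem close_subC_iff {S : Type*} {A : Set X} {f g : S → A} :
    Close (subC cX A) f g ↔ Close cX (Subtype.val ∘ f) (Subtype.val ∘ g) := by
  simp only [close_iff_range, subC, Set.mem_ofPred_eq, ← Set.range_comp]
  rfl

end Bornologous

def gaugeSquare (σ : X → ℝ≥0) (a : ℝ≥0) : Set (X × X) := {p | σ p.1 ≤ a ∧ σ p.2 ≤ a}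

/-- On a nonempty space, the bounded sets of `c` are then exactly the sets on which `σ` is
bounded above. -/
structure IsGauge (c : Set (Set (X × X))) (σ : X → ℝ≥0) : Prop where
  isLowerSet : IsLowerSet c
  diagonal_mem : Set.diagonal X ∈ c
  gaugeSquare_mem : ∀ a, gaugeSquare σ a ∈ c
  bddAbove_section : ∀ M ∈ c, ∀ x, BddAbove (σ '' {y | (x, y) ∈ M})

namespace IsGauge

variable {c : Set (Set (X × X))} {σ : X → ℝ≥0}

theorem mem_of_subset (h : IsGauge c σ) {M N : Set (X × X)} (hM : M ∈ c) (hNM : N ⊆ M) :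
    N ∈ c :=
  h.isLowerSet hNM hM

theorem bddAbove_of_isBounded (h : IsGauge c σ) {S : Set X} (hS : IsBounded c S) :
    BddAbove (σ '' S) := by
  obtain ⟨M, hM, x, rfl⟩ := hS
  exact h.bddAbove_section M hM x

theorem isBounded_of_bddAbove [Nonempty X] (h : IsGauge c σ) {S : Set X}
    (hS : BddAbove (σ '' S)) : IsBounded c S := by
  obtain ⟨a, ha⟩ := hS
  obtain ⟨x₀⟩ := ‹Nonempty X›
  refine ⟨{p | p.1 = x₀ ∧ p.2 ∈ S}, h.mem_of_subset (h.gaugeSquare_mem (max a (σ x₀))) ?_,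
    x₀, by simp⟩
  rintro ⟨x, y⟩ ⟨rfl, hy⟩
  exact ⟨le_max_right _ _, (ha ⟨y, hy, rfl⟩).trans (le_max_left _ _)⟩

theorem close_refl (h : IsGauge c σ) {S : Type*} (f : S → X) : Close c f f :=
  h.mem_of_subset h.diagonal_mem (by rintro _ ⟨s, rfl⟩; rfl)

theorem isCoarseMap [Nonempty X] {cY : Set (Set (Y × Y))} {τ : Y → ℝ≥0} {f : X → Y}
    (h : IsGauge c σ) (hY : IsGauge cY τ) (hf : IsBornologous c cY f)
    (hσ : ∀ x, σ x ≤ τ (f x)) : IsCoarseMap c cY f := by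
  refine ⟨hf, fun B hB => h.isBounded_of_bddAbove ?_⟩
  obtain ⟨a, ha⟩ := hY.bddAbove_of_isBounded hB
  exact ⟨a, by rintro _ ⟨x, hx, rfl⟩; exact (hσ x).trans (ha ⟨f x, hx, rfl⟩)⟩

protected theorem subC (h : IsGauge c σ) (A : Set X) :
    IsGauge (subC c A) (σ ∘ Subtype.val) where
  isLowerSet _ _ hNM hM := h.mem_of_subset hM (Set.image_mono hNM)
  diagonal_mem := h.mem_of_subset h.diagonal_mem <| by
    rintro _ ⟨⟨x, y⟩, hxy, rfl⟩
    exact congrArg Subtype.val hxy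
  gaugeSquare_mem a := h.mem_of_subset (h.gaugeSquare_mem a) <| by
    rintro _ ⟨p, hp, rfl⟩
    exact hp
  bddAbove_section M hM x := by
    refine (h.bddAbove_section _ hM x.1).mono ?_
    rintro _ ⟨y, hy, rfl⟩
    exact ⟨y.1, ⟨(x, y), hy, rfl⟩, rfl⟩

end IsGauge

section Products

variable {cX : Set (Set (X × X))} {cY : Set (Set (Y × Y))} {σ : X → ℝ≥0} {τ : Y → ℝ≥0}

theorem mem_prodC_iff (hX : IsLowerSet cX) (hY : IsLowerSet cY) {M : Set ((X × Y) × (X × Y))} :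
    M ∈ prodC cX cY ↔
      (fun p => (p.1.1, p.2.1)) '' M ∈ cX ∧ (fun p => (p.1.2, p.2.2)) '' M ∈ cY := by
  constructor
  · rintro ⟨M₁, hM₁, M₂, hM₂, hM⟩
    exact ⟨hX (by rintro _ ⟨p, hp, rfl⟩; exact (hM hp).1) hM₁,
      hY (by rintro _ ⟨p, hp, rfl⟩; exact (hM hp).2) hM₂⟩
  · rintro ⟨h₁, h₂⟩
    exact ⟨_, h₁, _, h₂, fun p hp => ⟨⟨p, hp, rfl⟩, ⟨p, hp, rfl⟩⟩⟩

theorem IsGauge.prodC (hX : IsGauge cX σ) (hY : IsGauge cY τ) :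
    IsGauge (prodC cX cY) (fun q => max (σ q.1) (τ q.2)) where
  isLowerSet := by
    rintro M N hNM ⟨M₁, hM₁, M₂, hM₂, hM⟩
    exact ⟨M₁, hM₁, M₂, hM₂, hNM.trans hM⟩
  diagonal_mem := ⟨_, hX.diagonal_mem, _, hY.diagonal_mem, by
    rintro ⟨p, q⟩ (rfl : p = q)
    exact ⟨rfl, rfl⟩⟩
  gaugeSquare_mem a := ⟨_, hX.gaugeSquare_mem a, _, hY.gaugeSquare_mem a, by
    rintro ⟨p, q⟩ ⟨hp, hq⟩
    exact ⟨⟨(le_max_left _ _).trans hp, (le_max_left _ _).trans hq⟩,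
      ⟨(le_max_right _ _).trans hp, (le_max_right _ _).trans hq⟩⟩⟩
  bddAbove_section := by
    rintro M ⟨M₁, hM₁, M₂, hM₂, hM⟩ x
    obtain ⟨a, ha⟩ := hX.bddAbove_section M₁ hM₁ x.1
    obtain ⟨b, hb⟩ := hY.bddAbove_section M₂ hM₂ x.2
    refine ⟨max a b, ?_⟩
    rintro _ ⟨y, hy, rfl⟩
    exact max_le_max (ha ⟨y.1, (hM hy).1, rfl⟩) (hb ⟨y.2, (hM hy).2, rfl⟩)

variable {ι : Type*} {W : ι → Type*} {c : ∀ i, Set (Set (W i × W i))} {ρ : ∀ i, W i → ℝ≥0}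

theorem mem_piC_iff (h : ∀ i, IsLowerSet (c i)) {M : Set ((∀ i, W i) × (∀ i, W i))} :
    M ∈ piC c ↔ ∀ i, (fun p => (p.1 i, p.2 i)) '' M ∈ c i := by
  constructor
  · rintro ⟨Mi, hMi, hM⟩ i
    exact h i (by rintro _ ⟨p, hp, rfl⟩; exact hM hp i) (hMi i)
  · intro hM
    exact ⟨_, hM, fun p hp i => ⟨p, hp, rfl⟩⟩

theorem IsGauge.piC [Fintype ι] (h : ∀ i, IsGauge (c i) (ρ i)) :
    IsGauge (piC c) (fun f => Finset.univ.sup fun i => ρ i (f i)) where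
  isLowerSet := by
    rintro M N hNM ⟨Mi, hMi, hM⟩
    exact ⟨Mi, hMi, hNM.trans hM⟩
  diagonal_mem := ⟨_, fun i => (h i).diagonal_mem, by
    rintro ⟨f, g⟩ (rfl : f = g) i
    rfl⟩
  gaugeSquare_mem a := ⟨_, fun i => (h i).gaugeSquare_mem a, by
    rintro ⟨f, g⟩ ⟨hf, hg⟩ i
    exact ⟨(Finset.le_sup (Finset.mem_univ i)).trans hf,
      (Finset.le_sup (Finset.mem_univ i)).trans hg⟩⟩
  bddAbove_section := by
    rintro M ⟨Mi, hMi, hM⟩ f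
    choose a ha using fun i => (h i).bddAbove_section (Mi i) (hMi i) (f i)
    refine ⟨Finset.univ.sup a, ?_⟩
    rintro _ ⟨g, hg, rfl⟩
    exact Finset.sup_mono_fun fun i _ => ha i ⟨g i, hM hg i, rfl⟩

end Products

section Sums

variable {cX : Set (Set (X × X))} {cY : Set (Set (Y × Y))} {σ : X → ℝ≥0} {τ : Y → ℝ≥0}

def sumEnvelope (MX : Set (X × X)) (MY : Set (Y × Y)) (D : Set (X ⊕ Y)) :
    Set ((X ⊕ Y) × (X ⊕ Y)) :=
  (fun p : X × X => ((Sum.inl p.1 : X ⊕ Y), Sum.inl p.2)) '' MX ∪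
    (fun p : Y × Y => ((Sum.inr p.1 : X ⊕ Y), Sum.inr p.2)) '' MY ∪ D ×ˢ D

theorem mem_of_inl_of_inr {MX : Set (X × X)} {MY : Set (Y × Y)} {D : Set (X ⊕ Y)} {x : X}
    {y : Y} {w : X ⊕ Y} (hx : (Sum.inl x, w) ∈ sumEnvelope MX MY D)
    (hy : (Sum.inr y, w) ∈ sumEnvelope MX MY D) : w ∈ D := by
  rcases w with w | w
  · rcases hy with (⟨_, _, h⟩ | ⟨_, _, h⟩) | ⟨_, hw⟩
    · cases congrArg Prod.fst h
    · cases congrArg Prod.snd h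
    · exact hw
  · rcases hx with (⟨_, _, h⟩ | ⟨_, _, h⟩) | ⟨_, hw⟩
    · cases congrArg Prod.snd h
    · cases congrArg Prod.fst h
    · exact hw

theorem IsGauge.isFinUnionBounded_iff [Nonempty X] (h : IsGauge cX σ) {S : Set X} :
    IsFinUnionBounded cX S ↔ BddAbove (σ '' S) := by
  constructor
  · rintro ⟨n, f, hf, rfl⟩
    choose b hb using fun i => h.bddAbove_of_isBounded (hf i)
    refine ⟨Finset.univ.sup b, ?_⟩
    rintro _ ⟨x, hx, rfl⟩
    obtain ⟨i, hi⟩ := Set.mem_iUnion.1 hx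
    exact (hb i ⟨x, hi, rfl⟩).trans (Finset.le_sup (Finset.mem_univ i))
  · intro hS
    exact ⟨1, fun _ => S, fun _ => h.isBounded_of_bddAbove hS, (Set.iUnion_const S).symm⟩

variable [Nonempty X] [Nonempty Y]

theorem mem_sumC_iff (hX : IsGauge cX σ) (hY : IsGauge cY τ) {M : Set ((X ⊕ Y) × (X ⊕ Y))} :
    M ∈ sumC cX cY ↔
      ∃ MX ∈ cX, ∃ MY ∈ cY, ∃ a, M ⊆ sumEnvelope MX MY {z | Sum.elim σ τ z ≤ a} := by
  constructor
  · rintro ⟨MX, hMX, MY, hMY, BX, BY, hBX, hBY, hM⟩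
    obtain ⟨a, ha⟩ := hX.isFinUnionBounded_iff.1 hBX
    obtain ⟨b, hb⟩ := hY.isFinUnionBounded_iff.1 hBY
    have hD : Sum.inl '' BX ∪ Sum.inr '' BY ⊆ {z | Sum.elim σ τ z ≤ max a b} := by
      rintro _ (⟨x, hx, rfl⟩ | ⟨y, hy, rfl⟩)
      · exact (ha ⟨x, hx, rfl⟩).trans (le_max_left a b)
      · exact (hb ⟨y, hy, rfl⟩).trans (le_max_right a b)
    exact ⟨MX, hMX, MY, hMY, max a b,
      hM.trans (Set.union_subset_union_right _ (Set.prod_mono hD hD))⟩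
  · rintro ⟨MX, hMX, MY, hMY, a, hM⟩
    refine ⟨MX, hMX, MY, hMY, {x | σ x ≤ a}, {y | τ y ≤ a},
      hX.isFinUnionBounded_iff.2 ⟨a, by rintro _ ⟨x, hx, rfl⟩; exact hx⟩,
      hY.isFinUnionBounded_iff.2 ⟨a, by rintro _ ⟨y, hy, rfl⟩; exact hy⟩, ?_⟩
    have hD : {z | Sum.elim σ τ z ≤ a} = Sum.inl '' {x | σ x ≤ a} ∪ Sum.inr '' {y | τ y ≤ a} := by
      ext (x | y) <;> simp
    rwa [hD] at hM

theorem sumEnvelope_mem (hX : IsGauge cX σ) (hY : IsGauge cY τ) {MX : Set (X × X)}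
    {MY : Set (Y × Y)} (hMX : MX ∈ cX) (hMY : MY ∈ cY) (a : ℝ≥0) :
    sumEnvelope MX MY {z | Sum.elim σ τ z ≤ a} ∈ sumC cX cY :=
  (mem_sumC_iff hX hY).2 ⟨MX, hMX, MY, hMY, a, subset_rfl⟩

theorem IsGauge.sumC (hX : IsGauge cX σ) (hY : IsGauge cY τ) :
    IsGauge (sumC cX cY) (Sum.elim σ τ) where
  isLowerSet := by
    rintro M N hNM ⟨MX, hMX, MY, hMY, BX, BY, hBX, hBY, hM⟩
    exact ⟨MX, hMX, MY, hMY, BX, BY, hBX, hBY, hNM.trans hM⟩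
  diagonal_mem := (mem_sumC_iff hX hY).2 ⟨_, hX.diagonal_mem, _, hY.diagonal_mem, 0, by
    rintro ⟨z, w⟩ (rfl : z = w)
    rcases z with x | y
    · exact Or.inl (Or.inl ⟨(x, x), rfl, rfl⟩)
    · exact Or.inl (Or.inr ⟨(y, y), rfl, rfl⟩)⟩
  gaugeSquare_mem a := (mem_sumC_iff hX hY).2
    ⟨_, hX.diagonal_mem, _, hY.diagonal_mem, a, fun _ hp => Or.inr hp⟩
  bddAbove_section := by
    intro M hM z
    obtain ⟨MX, hMX, MY, hMY, a, hM⟩ := (mem_sumC_iff hX hY).1 hM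
    obtain ⟨b, hb⟩ : BddAbove (Sum.elim σ τ '' {w | (z, w) ∈
        (fun p : X × X => ((Sum.inl p.1 : X ⊕ Y), Sum.inl p.2)) '' MX ∪
          (fun p : Y × Y => ((Sum.inr p.1 : X ⊕ Y), Sum.inr p.2)) '' MY}) := by
      rcases z with x | y
      · refine (hX.bddAbove_section MX hMX x).mono ?_
        rintro _ ⟨w, (⟨⟨x', x''⟩, hx, h⟩ | ⟨_, _, h⟩), rfl⟩
        · simp only [Prod.mk.injEq, Sum.inl.injEq] at h
          obtain ⟨rfl, rfl⟩ := h
          exact ⟨x'', hx, rfl⟩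
        · cases congrArg Prod.fst h
      · refine (hY.bddAbove_section MY hMY y).mono ?_
        rintro _ ⟨w, (⟨_, _, h⟩ | ⟨⟨y', y''⟩, hy, h⟩), rfl⟩
        · cases congrArg Prod.fst h
        · simp only [Prod.mk.injEq, Sum.inr.injEq] at h
          obtain ⟨rfl, rfl⟩ := h
          exact ⟨y'', hy, rfl⟩
    refine ⟨max a b, ?_⟩
    rintro _ ⟨w, hw, rfl⟩
    rcases hM hw with hw | ⟨_, hw⟩
    · exact (hb ⟨w, hw, rfl⟩).trans (le_max_right a b)
    · exact hw.trans (le_max_left a b)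

theorem isBornologous_inl (hX : IsGauge cX σ) (hY : IsGauge cY τ) :
    IsBornologous cX (sumC cX cY) Sum.inl := fun M hM =>
  (mem_sumC_iff hX hY).2 ⟨M, hM, _, hY.diagonal_mem, 0, fun _ hp => Or.inl (Or.inl hp)⟩

theorem isBornologous_inr (hX : IsGauge cX σ) (hY : IsGauge cY τ) :
    IsBornologous cY (sumC cX cY) Sum.inr := fun M hM =>
  (mem_sumC_iff hX hY).2 ⟨_, hX.diagonal_mem, M, hM, 0, fun _ hp => Or.inl (Or.inr hp)⟩

end Sums

namespace IsGeneralisedRay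

variable {c : Set (Set (ℝ≥0 × ℝ≥0))}

theorem exists_pos_gaugeSquare_mem (hc : IsGeneralisedRay c) :
    ∃ e > 0, gaugeSquare id e ∈ c := by
  obtain ⟨U, hU, hUopen, hdiag⟩ := hc.compatible.1 _ hc.coarse.diag_mem
  have hU0 : ∀ᶠ t in nhds (0 : ℝ≥0), ((0 : ℝ≥0), t) ∈ U :=
    (continuous_const.prodMk continuous_id).continuousAt.preimage_mem_nhds
      (hUopen.mem_nhds (hdiag rfl))
  obtain ⟨e, heU, he⟩ := (hU0.and_frequently (frequently_gt_nhds (0 : ℝ≥0))).exists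
  refine ⟨e, he, hc.coarse.subset_mem (hc.squeeze_mem hU) ?_⟩
  rintro ⟨u, v⟩ ⟨hu, hv⟩
  exact ⟨0, e, heU, zero_le, hu, zero_le, hv⟩

theorem gaugeSquare_two_mul_mem (hc : IsGeneralisedRay c) {a : ℝ≥0}
    (ha : gaugeSquare id a ∈ c) :
    gaugeSquare id (2 * a) ∈ c := by
  refine hc.coarse.subset_mem (hc.sum_mem ha ha) ?_
  rintro ⟨u, v⟩ ⟨hu, hv⟩
  have half_le : ∀ t : ℝ≥0, t ≤ 2 * a → t / 2 ≤ a := fun t ht => by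
    rwa [div_le_iff₀' two_pos]
  exact ⟨u / 2, v / 2, u / 2, v / 2, ⟨half_le u hu, half_le v hv⟩,
    ⟨half_le u hu, half_le v hv⟩, by simp⟩

theorem gaugeSquare_mem (hc : IsGeneralisedRay c) (a : ℝ≥0) : gaugeSquare id a ∈ c := by
  obtain ⟨e, he, hce⟩ := hc.exists_pos_gaugeSquare_mem
  have hpow : ∀ k : ℕ, gaugeSquare id (2 ^ k * e) ∈ c := by
    intro k
    induction k with
    | zero => simpa using hce
    | succ k ih =>
      simpa [pow_succ, mul_comm, mul_left_comm] using hc.gaugeSquare_two_mul_mem ih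
  obtain ⟨k, hk⟩ := pow_unbounded_of_one_lt (a / e) one_lt_two
  have hak : a ≤ 2 ^ k * e := ((div_lt_iff₀ he).1 hk).le
  exact hc.coarse.subset_mem (hpow k) fun p hp => ⟨hp.1.trans hak, hp.2.trans hak⟩

theorem isGauge (hc : IsGeneralisedRay c) : IsGauge c id where
  isLowerSet _ _ hNM hM := hc.coarse.subset_mem hM hNM
  diagonal_mem := hc.coarse.diag_mem
  gaugeSquare_mem := hc.gaugeSquare_mem
  bddAbove_section M hM x := by
    rw [Set.image_id]
    exact (hc.compatible.2 _ ⟨M, hM, x, rfl⟩).bddAbove.mono subset_closure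

theorem isBornologous_fold (hc : IsGeneralisedRay c) :
    IsBornologous (sumC c c) c (Sum.elim id id) := by
  intro M hM
  obtain ⟨MX, hMX, MY, hMY, a, hM⟩ := (mem_sumC_iff hc.isGauge hc.isGauge).1 hM
  refine hc.coarse.subset_mem (hc.coarse.union_mem (hc.coarse.union_mem hMX hMY)
    (hc.gaugeSquare_mem a)) ?_
  rintro _ ⟨p, hp, rfl⟩
  rcases hM hp with (⟨q, hq, rfl⟩ | ⟨q, hq, rfl⟩) | hq
  · exact Or.inl (Or.inl hq)
  · exact Or.inl (Or.inr hq)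
  · exact Or.inr hq

end IsGeneralisedRay

section Disk

variable {c : Set (Set (ℝ≥0 × ℝ≥0))} {n : ℕ}

def diskNorm (q : DiskT n) : ℝ≥0 :=
  max (Finset.univ.sup fun i => Sum.elim id id (q.1 i)) q.2

theorem fold_le_diskNorm (q : DiskT n) (i : Fin n) : Sum.elim id id (q.1 i) ≤ diskNorm q :=
  le_max_of_le_left (Finset.le_sup (f := fun i => Sum.elim id id (q.1 i)) (Finset.mem_univ i))

theorem isGauge_diskC (hc : IsGeneralisedRay c) (n : ℕ) : IsGauge (diskC c n) diskNorm :=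
  (IsGauge.piC fun _ => hc.isGauge.sumC hc.isGauge).prodC hc.isGauge

theorem mem_diskC_iff (hc : IsGeneralisedRay c) {M : Set (DiskT n × DiskT n)} :
    M ∈ diskC c n ↔ (∀ i, (fun p => (p.1.1 i, p.2.1 i)) '' M ∈ sumC c c) ∧
      (fun p => (p.1.2, p.2.2)) '' M ∈ c := by
  rw [diskC, mem_prodC_iff (IsGauge.piC fun _ => hc.isGauge.sumC hc.isGauge).isLowerSet
    hc.isGauge.isLowerSet, mem_piC_iff fun _ => (hc.isGauge.sumC hc.isGauge).isLowerSet]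
  simp only [Set.image_image]

theorem mem_sphereC_iff (hc : IsGeneralisedRay c) {M : Set (sphereSet n × sphereSet n)} :
    M ∈ sphereC c n ↔ ∀ i, (fun p => (p.1.1.1 i, p.2.1.1 i)) '' M ∈ sumC c c := by
  rw [sphereC, subC, Set.mem_ofPred_eq, mem_diskC_iff hc]
  simp only [Set.image_image]
  refine and_iff_left (hc.coarse.subset_mem hc.coarse.diag_mem ?_)
  rintro _ ⟨p, -, rfl⟩
  exact p.1.2.trans p.2.2.symm

theorem close_sphereC_iff (hc : IsGeneralisedRay c) {S : Type*} {f g : S → sphereSet n} :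
    Close (sphereC c n) f g ↔
      ∀ i, Close (sumC c c) (fun s => (f s).1.1 i) (fun s => (g s).1.1 i) := by
  simp only [close_iff_range, mem_sphereC_iff hc, ← Set.range_comp]
  rfl

instance : Nonempty (sphereSet n) := ⟨⟨(fun _ => Sum.inl 0, 0), rfl⟩⟩

end Disk

section LastCoordinate

variable {c : Set (Set (ℝ≥0 × ℝ≥0))} {n : ℕ} {ι : ℝ≥0 → ℝ≥0 ⊕ ℝ≥0}

def collapseLast (s : sphereSet (n + 1)) : DiskT n :=
  (Fin.init s.1.1, Sum.elim id id (s.1.1 (Fin.last n)))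

def extendLast (ι : ℝ≥0 → ℝ≥0 ⊕ ℝ≥0) (q : DiskT n) : sphereSet (n + 1) :=
  ⟨(Fin.snoc q.1 (ι q.2), 0), rfl⟩

@[simp]
theorem extendLast_castSucc (q : DiskT n) (j : Fin n) :
    (extendLast ι q).1.1 j.castSucc = q.1 j :=
  Fin.snoc_castSucc (α := fun _ => ℝ≥0 ⊕ ℝ≥0) ..

@[simp]
theorem extendLast_last (q : DiskT n) : (extendLast ι q).1.1 (Fin.last n) = ι q.2 :=
  Fin.snoc_last (α := fun _ => ℝ≥0 ⊕ ℝ≥0) ..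

theorem collapseLast_extendLast (hι : ∀ x, Sum.elim id id (ι x) = x) (q : DiskT n) :
    collapseLast (extendLast ι q) = q := by
  simp only [collapseLast, extendLast_last, hι]
  exact Prod.ext (Fin.init_snoc (α := fun _ => ℝ≥0 ⊕ ℝ≥0) ..) rfl

theorem extendLast_collapseLast {s : sphereSet (n + 1)}
    (hs : ι (Sum.elim id id (s.1.1 (Fin.last n))) = s.1.1 (Fin.last n)) :
    extendLast ι (collapseLast s) = s := by
  refine Subtype.ext (Prod.ext ?_ s.2.symm)
  change Fin.snoc (Fin.init s.1.1) (ι (Sum.elim id id (s.1.1 (Fin.last n)))) = s.1.1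
  rw [hs, Fin.snoc_init_self]

theorem diskNorm_le_collapseLast (s : sphereSet (n + 1)) :
    diskNorm s.1 ≤ diskNorm (collapseLast s) := by
  refine max_le (Finset.sup_le fun i _ => ?_) (s.2.trans_le zero_le)
  induction i using Fin.lastCases with
  | last => exact le_max_right _ _
  | cast j => exact fold_le_diskNorm (collapseLast s) j

theorem diskNorm_le_extendLast (hι : ∀ x, Sum.elim id id (ι x) = x) (q : DiskT n) :
    diskNorm q ≤ diskNorm (extendLast ι q).1 := by
  refine max_le (Finset.sup_le fun j _ => ?_) ?_
  · simpa using fold_le_diskNorm (extendLast ι q).1 j.castSucc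
  · simpa [hι] using fold_le_diskNorm (extendLast ι q).1 (Fin.last n)

theorem isBornologous_collapseLast (hc : IsGeneralisedRay c) :
    IsBornologous (sphereC c (n + 1)) (diskC c n) collapseLast := by
  intro M hM
  rw [mem_sphereC_iff hc] at hM
  rw [mem_diskC_iff hc]
  simp only [Set.image_image]
  refine ⟨fun j => hM j.castSucc, ?_⟩
  have := hc.isBornologous_fold _ (hM (Fin.last n))
  rwa [Set.image_image] at this

theorem isBornologous_extendLast (hc : IsGeneralisedRay c) (hι : IsBornologous c (sumC c c) ι) :
    IsBornologous (diskC c n) (sphereC c (n + 1)) (extendLast ι) := by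
  intro M hM
  rw [mem_diskC_iff hc] at hM
  rw [mem_sphereC_iff hc]
  intro i
  simp only [Set.image_image]
  induction i using Fin.lastCases with
  | last =>
    have := hι _ hM.2
    simpa only [extendLast_last, Set.image_image] using this
  | cast j => simpa only [extendLast_castSucc] using hM.1 j

end LastCoordinate

section Hemispheres

variable {c : Set (Set (ℝ≥0 × ℝ≥0))} {n : ℕ}

def leftHemisphere (n : ℕ) : Set (sphereSet (n + 1)) :=
  {s | ∃ x, s.1.1 (Fin.last n) = Sum.inl x}

/-- The two copies of `0` in `R ∨ R` are distinct points; the right hemisphere takes the left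
one too, so that the hemispheres meet in the equator. -/
def rightHemisphere (n : ℕ) : Set (sphereSet (n + 1)) :=
  {s | s.1.1 (Fin.last n) = Sum.inl 0 ∨ ∃ x, s.1.1 (Fin.last n) = Sum.inr x}

theorem mem_hemispheres_inter_iff {s : sphereSet (n + 1)} :
    s ∈ leftHemisphere n ∩ rightHemisphere n ↔ s.1.1 (Fin.last n) = Sum.inl 0 := by
  constructor
  · rintro ⟨⟨x, hx⟩, h | ⟨y, hy⟩⟩
    · exact h
    · cases hx.symm.trans hy
  · intro h
    exact ⟨⟨0, h⟩, Or.inl h⟩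

theorem leftHemisphere_union_rightHemisphere :
    leftHemisphere n ∪ rightHemisphere n = Set.univ := by
  refine Set.eq_univ_of_forall fun s => ?_
  rcases h : s.1.1 (Fin.last n) with x | x
  · exact Or.inl ⟨x, h⟩
  · exact Or.inr (Or.inr ⟨x, h⟩)

theorem isCoarselyExcisive_hemispheres (hc : IsGeneralisedRay c) :
    IsCoarselyExcisive (sphereC c (n + 1)) (leftHemisphere n) (rightHemisphere n) := by
  refine ⟨leftHemisphere_union_rightHemisphere, fun m hm => ?_⟩
  rw [mem_sphereC_iff hc] at hm
  choose MX hMX MY hMY a hm using fun i => (mem_sumC_iff hc.isGauge hc.isGauge).1 (hm i)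
  let E i := sumEnvelope (MX i) (MY i) {z | Sum.elim id id z ≤ a i}
  refine ⟨{p | ∀ i, (p.1.1.1 i, p.2.1.1 i) ∈ E i}, ?_, ?_⟩
  · rw [mem_sphereC_iff hc]
    intro i
    refine (hc.isGauge.sumC hc.isGauge).mem_of_subset
      (sumEnvelope_mem hc.isGauge hc.isGauge (hMX i) (hMY i) (a i)) ?_
    rintro _ ⟨p, hp, rfl⟩
    exact hp i
  · rintro y ⟨⟨s, ⟨x, hs⟩, hsy⟩, ⟨t, ht, hty⟩⟩
    refine ⟨extendLast Sum.inl (Fin.init s.1.1, 0),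
      mem_hemispheres_inter_iff.2 (extendLast_last _), fun i => ?_⟩
    induction i using Fin.lastCases with
    | last =>
      have hsy' := hm (Fin.last n) ⟨_, hsy, rfl⟩
      have hty' := hm (Fin.last n) ⟨_, hty, rfl⟩
      rw [extendLast_last]
      rcases ht with ht | ⟨x', ht⟩
      · rwa [← ht]
      · dsimp only at hsy' hty'
        rw [hs] at hsy'
        rw [ht] at hty'
        exact Or.inr ⟨(zero_le : (0 : ℝ≥0) ≤ a _), mem_of_inl_of_inr hsy' hty'⟩
    | cast j =>
      rw [extendLast_castSucc]
      exact hm j.castSucc ⟨_, hsy, rfl⟩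

theorem coarselyEquivalent_diskC_of_extendLast (hc : IsGeneralisedRay c)
    {A : Set (sphereSet (n + 1))} {ι : ℝ≥0 → ℝ≥0 ⊕ ℝ≥0} (hι : IsBornologous c (sumC c c) ι)
    (hfold : ∀ x, Sum.elim id id (ι x) = x) (hA : ∀ q, extendLast ι q ∈ A)
    (hclose : Close (sumC c c) (fun s : A => ι (Sum.elim id id (s.1.1.1 (Fin.last n))))
      (fun s => s.1.1.1 (Fin.last n))) :
    CoarselyEquivalent (subC (sphereC c (n + 1)) A) (diskC c n) := by
  let g : DiskT n → A := fun q => ⟨extendLast ι q, hA q⟩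
  have : Nonempty A := ⟨g default⟩
  have hgaugeA := ((isGauge_diskC hc (n + 1)).subC _).subC A
  have hgaugeD := isGauge_diskC hc n
  refine ⟨collapseLast ∘ Subtype.val, hgaugeA.isCoarseMap hgaugeD
    ((isBornologous_collapseLast hc).comp isBornologous_subtype_val)
    (fun s => diskNorm_le_collapseLast s.1), g, hgaugeD.isCoarseMap hgaugeA
    (isBornologous_subC_iff.2 (isBornologous_extendLast hc hι)) (diskNorm_le_extendLast hfold),
    ?_, ?_⟩
  · rw [close_subC_iff, close_sphereC_iff hc]
    intro i
    induction i using Fin.lastCases with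
    | last => simpa [g, collapseLast] using hclose
    | cast j =>
      simp only [g, Function.comp_apply, id, extendLast_castSucc]
      exact (hc.isGauge.sumC hc.isGauge).close_refl _
  · have hid : (collapseLast ∘ Subtype.val) ∘ g = id := funext (collapseLast_extendLast hfold)
    rw [hid]
    exact hgaugeD.close_refl id

theorem coarselyEquivalent_leftHemisphere (hc : IsGeneralisedRay c) :
    CoarselyEquivalent (subC (sphereC c (n + 1)) (leftHemisphere n)) (diskC c n) := by
  refine coarselyEquivalent_diskC_of_extendLast hc (isBornologous_inl hc.isGauge hc.isGauge)
    (fun _ => rfl) (fun q => ⟨q.2, extendLast_last q⟩) ?_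
  have hfix : (fun s : leftHemisphere n => Sum.inl (Sum.elim id id (s.1.1.1 (Fin.last n)))) =
      fun s => s.1.1.1 (Fin.last n) := by
    ext s
    obtain ⟨x, hx⟩ := s.2
    rw [hx]
    rfl
  rw [hfix]
  exact (hc.isGauge.sumC hc.isGauge).close_refl _

theorem coarselyEquivalent_rightHemisphere (hc : IsGeneralisedRay c) :
    CoarselyEquivalent (subC (sphereC c (n + 1)) (rightHemisphere n)) (diskC c n) := by
  refine coarselyEquivalent_diskC_of_extendLast hc (isBornologous_inr hc.isGauge hc.isGauge)
    (fun _ => rfl) (fun q => Or.inr ⟨q.2, extendLast_last q⟩) ?_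
  refine (hc.isGauge.sumC hc.isGauge).mem_of_subset (sumEnvelope_mem hc.isGauge hc.isGauge
    hc.coarse.diag_mem hc.coarse.diag_mem 0) ?_
  rintro _ ⟨s, rfl⟩
  dsimp only
  rcases s.2 with hs | ⟨x, hs⟩ <;> rw [hs]
  · exact Or.inr ⟨le_refl (0 : ℝ≥0), le_refl (0 : ℝ≥0)⟩
  · exact Or.inl (Or.inr ⟨(x, x), rfl, rfl⟩)

theorem coarselyEquivalent_equator (hc : IsGeneralisedRay c) :
    CoarselyEquivalent (subC (sphereC c (n + 1)) (leftHemisphere n ∩ rightHemisphere n))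
      (sphereC c n) := by
  let f : ↥(leftHemisphere n ∩ rightHemisphere n) → sphereSet n := fun s =>
    ⟨collapseLast s.1, by
      change Sum.elim id id (s.1.1.1 (Fin.last n)) = 0
      rw [mem_hemispheres_inter_iff.1 s.2]
      rfl⟩
  let g : sphereSet n → ↥(leftHemisphere n ∩ rightHemisphere n) := fun t =>
    ⟨extendLast Sum.inl t.1, mem_hemispheres_inter_iff.2 (by rw [extendLast_last, t.2])⟩
  have : Nonempty ↥(leftHemisphere n ∩ rightHemisphere n) := ⟨g (Classical.arbitrary _)⟩
  have hgaugeI := ((isGauge_diskC hc (n + 1)).subC _).subC (leftHemisphere n ∩ rightHemisphere n)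
  have hgaugeS := (isGauge_diskC hc n).subC (sphereSet n)
  have hgf : g ∘ f = id := funext fun s => Subtype.ext <| extendLast_collapseLast <| by
    rw [mem_hemispheres_inter_iff.1 s.2]
    rfl
  have hfg : f ∘ g = id := funext fun t => Subtype.ext (collapseLast_extendLast (fun _ => rfl) t.1)
  refine ⟨f, hgaugeI.isCoarseMap hgaugeS (isBornologous_subC_iff.2
      ((isBornologous_collapseLast hc).comp isBornologous_subtype_val))
      (fun s => diskNorm_le_collapseLast s.1),
    g, hgaugeS.isCoarseMap hgaugeI (isBornologous_subC_iff.2 ((isBornologous_extendLast hc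
      (isBornologous_inl hc.isGauge hc.isGauge)).comp isBornologous_subtype_val))
      (fun t => diskNorm_le_extendLast (fun _ => rfl) t.1), ?_, ?_⟩
  · rw [hgf]
    exact hgaugeI.close_refl id
  · rw [hfg]
    exact hgaugeS.close_refl id

end Hemispheres

/-- For a generalised ray `R` and `p ≥ 0`, there are subsets `A` and `B`
of the coarse sphere `S_R^{p+1} = (R ∨ R)^{p+2} × {0}` with `A ∪ B = S_R^{p+1}` such that
the decomposition is coarsely excisive, `A` and `B` are each coarsely equivalent to the
coarse disk `D_R^{p+1}`, and `A ∩ B` is coarsely equivalent to the sphere `S_R^p`. -/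
theorem sphere_excisive_decomposition
    (c : Set (Set (ℝ≥0 × ℝ≥0))) (hc : IsGeneralisedRay c) (p : ℕ) :
    ∃ A B : Set ↥(sphereSet (p + 2)),
      IsCoarselyExcisive (sphereC c (p + 2)) A B ∧
        CoarselyEquivalent (subC (sphereC c (p + 2)) A) (diskC c (p + 1)) ∧
        CoarselyEquivalent (subC (sphereC c (p + 2)) B) (diskC c (p + 1)) ∧
        CoarselyEquivalent (subC (sphereC c (p + 2)) (A ∩ B)) (sphereC c (p + 1)) :=
  ⟨leftHemisphere (p + 1), rightHemisphere (p + 1), isCoarselyExcisive_hemispheres hc,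
    coarselyEquivalent_leftHemisphere hc, coarselyEquivalent_rightHemisphere hc,
    coarselyEquivalent_equator hc⟩

end CoarsePaper
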